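/- Let r > 1, c₁ ≥ 1, c₂ > 0, C₀ > 0, and let A : ℕ → ℝ be a nonnegative sequence satisfying A(k+1) ≤ c₁ r^{c₂ k} A(k)^r + c₁ r^{c₂ k} + C₀^{r^{k+1}} for all k ≥ 2. Then there is a constant C (depending only on r, c₁, c₂, C₀ and A(2)) such that A(k)^{1/r^k} ≤ C for all k ≥ 2. -/

import Mathlib

/-!
Pass to the majorant `B k = max (A k) (max (C₀ ^ r ^ k) 1) ≥ 1`, which obeys the cleaner
recursion `B (k+1) ≤ 3 c₁ r^(c₂ k) B(k)^r`. Its logarithm `u k = log B k` then satisfies the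
affine recursion `u (k+1) ≤ r u k + c₂ log r · k + log (3 c₁)`; adding the correction `a k + b` with
`a = c₂ log r / (r - 1)` and `b = (log (3 c₁) + a) / (r - 1)` turns it into `v (k+1) ≤ r v k`,
so `log B k = O(r^k)`, which is the claim after exponentiating.
-/

open Real

theorem max_le_three_mul_rpow_max {x y c K r : ℝ} (hx : 0 ≤ x) (hc : 0 ≤ c) (hK : 1 ≤ K)
    (hr : 0 ≤ r) (hy : y ≤ K * x ^ r + K + c ^ r) :
    max y (max (c ^ r) 1) ≤ 3 * K * max x (max c 1) ^ r := by
  set M := max x (max c 1)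
  have hM_one : 1 ≤ M ^ r := one_le_rpow (le_max_of_le_right (le_max_right _ _)) hr
  have hx_le : x ^ r ≤ M ^ r := rpow_le_rpow hx (le_max_left _ _) hr
  have hc_le : c ^ r ≤ M ^ r := rpow_le_rpow hc (le_max_of_le_right (le_max_left _ _)) hr
  have hM_le : M ^ r ≤ K * M ^ r := le_mul_of_one_le_left (by positivity) hK
  have hK_le : K ≤ K * M ^ r := le_mul_of_one_le_right (by positivity) hM_one
  have hKx_le : K * x ^ r ≤ K * M ^ r := by gcongr
  refine max_le ?_ (max_le ?_ ?_) <;> linarith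

theorem exists_le_mul_pow_of_le_mul_add {u : ℕ → ℝ} {r α β : ℝ} {m : ℕ} (hr : 1 < r)
    (hα : 0 ≤ α) (hβ : 0 ≤ β) (h : ∀ k, m ≤ k → u (k + 1) ≤ r * u k + β * k + α) :
    ∃ D, ∀ k, m ≤ k → u k ≤ D * r ^ k := by
  have hr₁ : 0 < r - 1 := by linarith
  set a := β / (r - 1)
  set b := (α + a) / (r - 1)
  have ha : a * (r - 1) = β := div_mul_cancel₀ _ hr₁.ne'
  have hb : b * (r - 1) = α + a := div_mul_cancel₀ _ hr₁.ne'
  have ha₀ : 0 ≤ a := by positivity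
  have hb₀ : 0 ≤ b := by positivity
  set D := (u m + a * m + b) / r ^ m
  have hv : ∀ k, m ≤ k → u k + a * k + b ≤ D * r ^ k := by
    intro k hk
    induction k, hk using Nat.le_induction with
    | base => exact (div_mul_cancel₀ _ (pow_pos (by linarith) m).ne').ge
    | succ k hk ih =>
      calc u (k + 1) + a * (k + 1 : ℕ) + b ≤ r * (u k + a * k + b) := by
            push_cast
            nlinarith [h k hk]
        _ ≤ r * (D * r ^ k) := by gcongr
        _ = D * r ^ (k + 1) := by ring
  exact ⟨D, fun k hk => by nlinarith [hv k hk]⟩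

theorem rpow_one_div_le_exp_of_log_le {x t D : ℝ} (hx : 0 < x) (ht : 0 < t)
    (h : log x ≤ D * t) : x ^ (1 / t) ≤ exp D := by
  rw [rpow_def_of_pos hx, exp_le_exp, mul_one_div, div_le_iff₀ ht]
  exact h

/-- Reverse Hölder / Moser iteration lemma: if a nonnegative sequence `A` satisfies
`A (k+1) ≤ c₁ r^(c₂ k) A(k)^r + c₁ r^(c₂ k) + C₀^(r^(k+1))` for all `k ≥ 2` (with `r > 1`,
`c₁ ≥ 1`, `c₂ > 0`, `C₀ > 0`), then `A(k)^(1/r^k)` is uniformly bounded for `k ≥ 2`. -/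
theorem moser_iteration_bound (r c₁ c₂ C₀ : ℝ) (hr : 1 < r) (hc₁ : 1 ≤ c₁)
    (hc₂ : 0 < c₂) (hC₀ : 0 < C₀) (A : ℕ → ℝ) (hA : ∀ k, 0 ≤ A k)
    (hrec : ∀ k, 2 ≤ k →
      A (k + 1) ≤ c₁ * r ^ (c₂ * k) * A k ^ r + c₁ * r ^ (c₂ * k) + C₀ ^ (r ^ (k + 1))) :
    ∃ C : ℝ, ∀ k, 2 ≤ k → A k ^ (1 / r ^ k) ≤ C := by
  have hr₀ : 0 < r := by linarith
  set B : ℕ → ℝ := fun k => max (A k) (max (C₀ ^ r ^ k) 1)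
  have hB_pos : ∀ k, 0 < B k := fun k => one_pos.trans_le (le_max_of_le_right (le_max_right _ _))
  have hstep : ∀ k, 2 ≤ k → B (k + 1) ≤ 3 * c₁ * r ^ (c₂ * k) * B k ^ r := fun k hk => by
    have hK : 1 ≤ c₁ * r ^ (c₂ * k) := one_le_mul_of_one_le_of_one_le hc₁
      (one_le_rpow hr.le (by positivity))
    have hC : C₀ ^ r ^ (k + 1) = (C₀ ^ r ^ k) ^ r := by rw [pow_succ, rpow_mul hC₀.le]
    have h := max_le_three_mul_rpow_max (hA k) (by positivity) hK hr₀.le (hC ▸ hrec k hk)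
    rw [← hC, ← mul_assoc] at h
    exact h
  have hlog : ∀ k, 2 ≤ k →
      log (B (k + 1)) ≤ r * log (B k) + c₂ * log r * k + log (3 * c₁) := fun k hk => by
    have h := log_le_log (hB_pos _) (hstep k hk)
    rw [log_mul (by positivity) (by positivity), log_mul (by positivity) (by positivity),
      log_rpow hr₀, log_rpow (hB_pos k)] at h
    linarith
  obtain ⟨D, hD⟩ := exists_le_mul_pow_of_le_mul_add (u := fun k => log (B k)) hr
    (log_nonneg (by linarith : (1 : ℝ) ≤ 3 * c₁)) (mul_nonneg hc₂.le (log_nonneg hr.le)) hlog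
  refine ⟨exp D, fun k hk => ?_⟩
  calc A k ^ (1 / r ^ k) ≤ B k ^ (1 / r ^ k) :=
        rpow_le_rpow (hA k) (le_max_left _ _) (by positivity)
    _ ≤ exp D := rpow_one_div_le_exp_of_log_le (hB_pos k) (by positivity) (hD k hk)
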